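/- Let f : ℝ² × S¹ → ℂ be continuous and supported in K × S¹ for some compact K ⊂ ℝ². Then for every ξ ∈ ℝ² and every r ≥ 0, the Fourier transform in x of the anisotropic spherical Radon transform satisfies ∫_{ℝ²} e^{−i x·ξ} (Sf)(x,r) dx = ∫_{S¹} e^{i r θ·ξ} (ℱf)(ξ, θ) ds(θ). -/

import Mathlib

/-!
Expanding `S f`, the left-hand side is a double integral over `ℝ² × [0, 2π]`. For fixed `r` its
integrand is continuous and vanishes unless `x` lies in the compact `r`-thickening of `K`, so
Fubini applies. After swapping, the substitution `x ↦ x - rθ` in the inner integral turns the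
kernel `e^{-i x·ξ}` into `e^{i r θ·ξ} e^{-i x·ξ}`, leaving `e^{i r θ·ξ} (ℱ f)(ξ, θ)`.
-/

open MeasureTheory Real Set

noncomputable section

/-- The point of the unit circle `S¹ ⊂ ℝ²` at angle `t`. -/
def circ (t : ℝ) : ℝ × ℝ := (Real.cos t, Real.sin t)

/-- The anisotropic spherical Radon transform
`(S f)(x, r) = ∫_{S¹} f(x + rθ, θ) ds(θ)`. -/
def radonS (f : ℝ × ℝ → ℝ × ℝ → ℂ) (x : ℝ × ℝ) (r : ℝ) : ℂ :=
  ∫ t in (0 : ℝ)..(2 * π), f (x + r • circ t) (circ t)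

/-- The Fourier transform in the first variable,
`(ℱ f)(ξ, θ) = ∫_{ℝ²} e^{−i x·ξ} f(x, θ) dx`. -/
def fourier1 (f : ℝ × ℝ → ℝ × ℝ → ℂ) (ξ θ : ℝ × ℝ) : ℂ :=
  ∫ x : ℝ × ℝ, Complex.exp (-Complex.I * ((x.1 * ξ.1 + x.2 * ξ.2 : ℝ) : ℂ)) * f x θ

@[fun_prop]
lemma continuous_circ : Continuous circ :=
  continuous_cos.prodMk continuous_sin

lemma norm_smul_circ_le {r : ℝ} (hr : 0 ≤ r) (t : ℝ) : ‖r • circ t‖ ≤ r := by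
  rw [norm_smul, Real.norm_of_nonneg hr]
  exact mul_le_of_le_one_right hr (max_le (abs_cos_le_one t) (abs_sin_le_one t))

def pairing (ξ : ℝ × ℝ) : ℝ × ℝ →+ ℝ where
  toFun x := x.1 * ξ.1 + x.2 * ξ.2
  map_zero' := by simp
  map_add' x y := by simp only [Prod.fst_add, Prod.snd_add]; ring

@[simp]
lemma pairing_apply (ξ x : ℝ × ℝ) : pairing ξ x = x.1 * ξ.1 + x.2 * ξ.2 := rfl

lemma integral_exp_mul_comp_add_right {E F : Type*} [AddGroup E] [MeasurableSpace E]
    [MeasurableAdd E] (μ : Measure E) [μ.IsAddRightInvariant] [FunLike F E ℝ]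
    [AddHomClass F E ℝ] (L : F) (g : E → ℂ) (c : E) :
    ∫ x, Complex.exp (-Complex.I * L x) * g (x + c) ∂μ =
      Complex.exp (Complex.I * L c) * ∫ x, Complex.exp (-Complex.I * L x) * g x ∂μ := by
  rw [← integral_add_right_eq_self (fun x ↦ Complex.exp (-Complex.I * L x) * g x) c,
    ← integral_const_mul]
  congr 1 with x
  rw [← mul_assoc, ← Complex.exp_add, map_add, Complex.ofReal_add]
  ring_nf

lemma integrable_prod_restrict_Ioc_of_continuous {X E : Type*} [TopologicalSpace X]
    [T2Space X] [MeasurableSpace X] [OpensMeasurableSpace X]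
    [NormedAddCommGroup E] (μ : Measure X) [IsFiniteMeasureOnCompacts μ] [SFinite μ]
    {G : X × ℝ → E} (hG : Continuous G) {K : Set X} (hK : IsCompact K)
    (hGK : ∀ x ∉ K, ∀ t, G (x, t) = 0) (a b : ℝ) :
    Integrable G (μ.prod (volume.restrict (Ioc a b))) := by
  rw [← Measure.restrict_univ (μ := μ), Measure.prod_restrict, ← IntegrableOn]
  have h_compact : IntegrableOn G (K ×ˢ Icc a b) (μ.prod volume) :=
    hG.continuousOn.integrableOn_compact (hK.prod isCompact_Icc)
  refine h_compact.of_forall_sdiff_eq_zero (MeasurableSet.univ.prod measurableSet_Ioc)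
    fun p hp ↦ hGK p.1 ?_ p.2
  exact fun hpK ↦ hp.2 ⟨hpK, Ioc_subset_Icc_self hp.1.2⟩

lemma mem_cthickening_of_add_mem {E : Type*} [SeminormedAddCommGroup E] {K : Set E} {x v : E}
    {r : ℝ} (hv : ‖v‖ ≤ r) (h : x + v ∈ K) : x ∈ Metric.cthickening r K :=
  Metric.mem_cthickening_of_dist_le x (x + v) r K h (by simpa [dist_eq_norm] using hv)

/-- **Fourier transform of the anisotropic spherical Radon transform.** For a continuous
`f : ℝ² × S¹ → ℂ` supported in `K × S¹` with `K` compact, for every frequency `ξ` and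
radius `r ≥ 0`,
`∫_{ℝ²} e^{−i x·ξ} (S f)(x, r) dx = ∫_{S¹} e^{i r θ·ξ} (ℱ f)(ξ, θ) ds(θ)`. -/
theorem fourier_of_radon
    (f : ℝ × ℝ → ℝ × ℝ → ℂ)
    (hf : Continuous (fun p : (ℝ × ℝ) × ℝ => f p.1 (circ p.2)))
    (K : Set (ℝ × ℝ)) (hK : IsCompact K)
    (hsupp : ∀ x ∉ K, ∀ t : ℝ, f x (circ t) = 0) :
    ∀ ξ : ℝ × ℝ, ∀ r : ℝ, 0 ≤ r →
      (∫ x : ℝ × ℝ, Complex.exp (-Complex.I * ((x.1 * ξ.1 + x.2 * ξ.2 : ℝ) : ℂ)) *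
          radonS f x r) =
        ∫ t in (0 : ℝ)..(2 * π),
          Complex.exp (Complex.I *
              ((r * ((circ t).1 * ξ.1 + (circ t).2 * ξ.2) : ℝ) : ℂ)) *
            fourier1 f ξ (circ t) := by
  intro ξ r hr
  set F : (ℝ × ℝ) × ℝ → ℂ := fun p ↦
    Complex.exp (-Complex.I * ((p.1.1 * ξ.1 + p.1.2 * ξ.2 : ℝ) : ℂ)) *
      f (p.1 + r • circ p.2) (circ p.2)
  have hF_cont : Continuous F := by
    have h_shear : Continuous fun p : (ℝ × ℝ) × ℝ ↦ (p.1 + r • circ p.2, p.2) := by fun_prop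
    exact .mul (by fun_prop) (hf.comp h_shear)
  have hF_supp : ∀ x ∉ Metric.cthickening r K, ∀ t, F (x, t) = 0 := by
    intro x hx t
    have hxK : x + r • circ t ∉ K := fun h ↦
      hx (mem_cthickening_of_add_mem (norm_smul_circ_le hr t) h)
    simp [F, hsupp _ hxK]
  have hF_int := integrable_prod_restrict_Ioc_of_continuous volume hF_cont hK.cthickening hF_supp
    0 (2 * π)
  have hF_shift : ∀ t, ∫ x, F (x, t) = Complex.exp (Complex.I *
      ((r * ((circ t).1 * ξ.1 + (circ t).2 * ξ.2) : ℝ) : ℂ)) * fourier1 f ξ (circ t) := by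
    intro t
    rw [fourier1, show r * ((circ t).1 * ξ.1 + (circ t).2 * ξ.2) = pairing ξ (r • circ t) by
      simp only [pairing_apply, Prod.smul_fst, Prod.smul_snd, smul_eq_mul]; ring]
    exact integral_exp_mul_comp_add_right volume (pairing ξ) (fun x ↦ f x (circ t)) (r • circ t)
  simp_rw [radonS, intervalIntegral.integral_of_le two_pi_pos.le, ← integral_const_mul]
  exact (integral_integral_swap hF_int).trans (integral_congr_ae (.of_forall hF_shift))

end
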